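/- Let m ≥ n ≥ 2 and let U be an n×m matrix with nonnegative entries whose rows each sum to 1. Then σ₁(U)² + σ₂(U)² = n if and only if every row of U has exactly one nonzero entry (which then equals 1) and at most two columns of U contain a nonzero entry. -/

import Mathlib

/-- The `k`-th largest singular value (`k` is 0-indexed, so `σ₁ = singVal U 0`,
`σ₂ = singVal U 1`): the square root of the `k`-th largest eigenvalue of the
Gram matrix `Uᵀ U` (for real matrices `Uᴴ = Uᵀ`). -/
noncomputable def singVal {α β : Type*} [Fintype α] [Fintype β] [DecidableEq β]
    (U : Matrix α β ℝ) (k : ℕ) : ℝ :=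
  Real.sqrt
    (((Finset.univ.val.map
      (Matrix.isHermitian_conjTranspose_mul_self U).eigenvalues).sort (· ≥ ·)).getD k 0)

/-!
The squares `σₖ²` are the eigenvalues of `Uᵀ U`, which are nonnegative and sum to
`tr (Uᵀ U) = ∑ U i j ^ 2 ≤ ∑ U i j = n`, because `0 ≤ U i j ≤ 1`. Hence `σ₁² + σ₂² ≤ n`, with
equality iff `∑ U i j ^ 2 = n`, i.e. every row is a standard basis vector, and all eigenvalues but
the two largest vanish, i.e. `rank (Uᵀ U) ≤ 2`. When the rows are standard basis vectors, `Uᵀ U` is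
the diagonal matrix of column sums, whose rank is the number of nonzero columns.
-/

open Matrix Finset

namespace List

lemma getD_of_forall_mem {α : Type*} {p : α → Prop} {L : List α} {d : α}
    (hL : ∀ x ∈ L, p x) (hd : p d) (k : ℕ) : p (L.getD k d) := by
  rcases lt_or_ge k L.length with hk | hk
  · rw [getD_eq_getElem _ _ hk]
    exact hL _ (getElem_mem hk)
  · rwa [getD_eq_default _ _ hk]

lemma getD_zero_add_getD_one_add_sum_drop_two (L : List ℝ) :
    L.getD 0 0 + L.getD 1 0 + (L.drop 2).sum = L.sum := by
  rcases L with _ | ⟨a, _ | ⟨b, t⟩⟩ <;> simp [add_assoc]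

lemma getD_zero_add_getD_one_le_sum {L : List ℝ} (hL0 : ∀ x ∈ L, 0 ≤ x) :
    L.getD 0 0 + L.getD 1 0 ≤ L.sum := by
  rw [← L.getD_zero_add_getD_one_add_sum_drop_two, le_add_iff_nonneg_right]
  exact sum_nonneg fun x hx => hL0 x (mem_of_mem_drop hx)

lemma getD_zero_add_getD_one_eq_sum_iff {L : List ℝ} (hL0 : ∀ x ∈ L, 0 ≤ x) :
    L.getD 0 0 + L.getD 1 0 = L.sum ↔ ∀ x ∈ L.drop 2, x = 0 := by
  rw [← L.getD_zero_add_getD_one_add_sum_drop_two, left_eq_add]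
  exact ⟨all_zero_of_le_zero_le_of_sum_eq_zero fun x hx => hL0 x (mem_of_mem_drop hx),
    sum_eq_zero⟩

lemma countP_ne_zero_le_iff_of_pairwise_ge {L : List ℝ} (hL : L.Pairwise (· ≥ ·))
    (hL0 : ∀ x ∈ L, 0 ≤ x) (k : ℕ) :
    L.countP (· ≠ 0) ≤ k ↔ ∀ x ∈ L.drop k, x = 0 := by
  induction L generalizing k with
  | nil => simp
  | cons a t ih =>
    obtain ⟨hat, ht⟩ := pairwise_cons.mp hL
    have ht0 : ∀ x ∈ t, 0 ≤ x := fun x hx => hL0 x (mem_cons_of_mem a hx)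
    rcases k with _ | k
    · simp [countP_eq_zero]
    rw [countP_cons, drop_succ_cons]
    by_cases ha : a = 0
    · have ht_zero : ∀ x ∈ t, x = 0 := fun x hx => le_antisymm (ha ▸ hat x hx) (ht0 x hx)
      have : t.countP (· ≠ 0) = 0 := countP_eq_zero.mpr (by simpa using ht_zero)
      simp only [this, ha, ne_eq, not_true_eq_false, decide_false, Bool.false_eq_true,
        ↓reduceIte, add_zero, zero_le, true_iff]
      exact fun x hx => ht_zero x (mem_of_mem_drop hx)
    · simp only [ha, ne_eq, not_false_eq_true, decide_true, ↓reduceIte, add_le_add_iff_right]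
      exact ih ht ht0 k

end List

namespace Matrix.IsHermitian

variable {n 𝕜 : Type*} [Fintype n] [DecidableEq n] [RCLike 𝕜] {A : Matrix n n 𝕜}

noncomputable def sortedEigenvalues (hA : A.IsHermitian) : List ℝ :=
  (univ.val.map hA.eigenvalues).sort (· ≥ ·)

lemma pairwise_sortedEigenvalues (hA : A.IsHermitian) :
    hA.sortedEigenvalues.Pairwise (· ≥ ·) :=
  Multiset.pairwise_sort _ _

lemma coe_sortedEigenvalues (hA : A.IsHermitian) :
    (hA.sortedEigenvalues : Multiset ℝ) = univ.val.map hA.eigenvalues :=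
  Multiset.sort_eq _ _

lemma mem_sortedEigenvalues {hA : A.IsHermitian} {x : ℝ} :
    x ∈ hA.sortedEigenvalues ↔ ∃ i, hA.eigenvalues i = x := by
  rw [← Multiset.mem_coe, coe_sortedEigenvalues]
  simp

lemma sum_sortedEigenvalues (hA : A.IsHermitian) :
    (hA.sortedEigenvalues.sum : 𝕜) = A.trace := by
  rw [hA.trace_eq_sum_eigenvalues, ← Multiset.sum_coe, coe_sortedEigenvalues,
    Finset.sum_map_val]
  push_cast
  rfl

lemma countP_sortedEigenvalues_ne_zero (hA : A.IsHermitian) :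
    hA.sortedEigenvalues.countP (· ≠ 0) = A.rank := by
  rw [hA.rank_eq_card_non_zero_eigs, ← Multiset.coe_countP, coe_sortedEigenvalues,
    Multiset.countP_map, Fintype.card_subtype]
  rfl

end Matrix.IsHermitian

open scoped ComplexOrder in
lemma Matrix.PosSemidef.nonneg_of_mem_sortedEigenvalues {n 𝕜 : Type*} [Fintype n]
    [DecidableEq n] [RCLike 𝕜] {A : Matrix n n 𝕜} (hA : A.PosSemidef) {x : ℝ}
    (hx : x ∈ hA.1.sortedEigenvalues) : 0 ≤ x := by
  obtain ⟨i, rfl⟩ := IsHermitian.mem_sortedEigenvalues.mp hx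
  exact hA.eigenvalues_nonneg i

lemma singVal_eq_sqrt_getD {α β : Type*} [Fintype α] [Fintype β] [DecidableEq β]
    (U : Matrix α β ℝ) (k : ℕ) :
    singVal U k = √((isHermitian_conjTranspose_mul_self U).sortedEigenvalues.getD k 0) :=
  rfl

section Stochastic

variable {ι : Type*} [Fintype ι] {v : ι → ℝ}

lemma sq_le_self_of_nonneg_of_sum_eq_one (hv : ∀ j, 0 ≤ v j) (hsum : ∑ j, v j = 1) (j : ι) :
    v j ^ 2 ≤ v j := by
  have hj1 : v j ≤ 1 := hsum ▸ single_le_sum (fun j _ => hv j) (mem_univ j)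
  nlinarith [hv j]

lemma sum_sq_le_one_of_nonneg_of_sum_eq_one (hv : ∀ j, 0 ≤ v j) (hsum : ∑ j, v j = 1) :
    ∑ j, v j ^ 2 ≤ 1 :=
  hsum ▸ sum_le_sum fun j _ => sq_le_self_of_nonneg_of_sum_eq_one hv hsum j

lemma sum_sq_eq_one_iff_of_nonneg_of_sum_eq_one (hv : ∀ j, 0 ≤ v j) (hsum : ∑ j, v j = 1) :
    ∑ j, v j ^ 2 = 1 ↔ ∃ j, v j = 1 ∧ ∀ j', j' ≠ j → v j' = 0 := by
  classical
  constructor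
  · intro h
    have hsq : ∀ j, v j ^ 2 = v j := fun j =>
      (sum_eq_sum_iff_of_le fun j _ => sq_le_self_of_nonneg_of_sum_eq_one hv hsum j).mp
        (h.trans hsum.symm) j (mem_univ j)
    obtain ⟨j, -, hj⟩ := exists_ne_zero_of_sum_ne_zero (hsum ▸ one_ne_zero : ∑ j, v j ≠ 0)
    have hj1 : v j = 1 := (mul_eq_left₀ hj).mp ((sq (v j)).symm.trans (hsq j))
    refine ⟨j, hj1, fun j' hj' => le_antisymm ?_ (hv j')⟩
    have hpair : v j + v j' ≤ 1 := hsum ▸ by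
      simpa [sum_pair hj'.symm] using
        sum_le_sum_of_subset_of_nonneg (subset_univ {j, j'}) fun k _ _ => hv k
    linarith
  · rintro ⟨j, hj1, hj0⟩
    rw [sum_eq_single j (fun j' _ hj' => by simp [hj0 j' hj']) (by simp), hj1, one_pow]

end Stochastic

section RowStochastic

variable {α β : Type*} [Fintype α] {U : Matrix α β ℝ}

lemma trace_conjTranspose_mul_self_eq_sum_sq [Fintype β] (U : Matrix α β ℝ) :
    (Uᴴ * U).trace = ∑ i, ∑ j, U i j ^ 2 := by
  simp only [trace, diag_apply, mul_apply, conjTranspose_apply, star_trivial, sq]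
  exact sum_comm

lemma sum_sum_sq_le_card [Fintype β] (hU : ∀ i j, 0 ≤ U i j) (hUrow : ∀ i, ∑ j, U i j = 1) :
    ∑ i, ∑ j, U i j ^ 2 ≤ Fintype.card α := by
  simpa using sum_le_sum fun i (_ : i ∈ univ) =>
    sum_sq_le_one_of_nonneg_of_sum_eq_one (hU i) (hUrow i)

lemma sum_sum_sq_eq_card_iff [Fintype β] (hU : ∀ i j, 0 ≤ U i j) (hUrow : ∀ i, ∑ j, U i j = 1) :
    ∑ i, ∑ j, U i j ^ 2 = Fintype.card α ↔
      ∀ i, ∃ j, U i j = 1 ∧ ∀ j', j' ≠ j → U i j' = 0 := by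
  have hle : ∀ i ∈ univ, ∑ j, U i j ^ 2 ≤ 1 := fun i _ =>
    sum_sq_le_one_of_nonneg_of_sum_eq_one (hU i) (hUrow i)
  rw [Fintype.card_eq_sum_ones, Nat.cast_sum, Nat.cast_one, sum_eq_sum_iff_of_le hle]
  simp only [mem_univ, true_imp_iff, sum_sq_eq_one_iff_of_nonneg_of_sum_eq_one (hU _) (hUrow _)]

variable [DecidableEq β]

lemma conjTranspose_mul_self_eq_diagonal_of_rows_single
    (h : ∀ i, ∃ j, U i j = 1 ∧ ∀ j', j' ≠ j → U i j' = 0) :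
    Uᴴ * U = diagonal fun j => ∑ i, U i j := by
  have hrow : ∀ i, ∃ j, U i = Pi.single j 1 := fun i => by
    obtain ⟨j, h1, h0⟩ := h i
    exact ⟨j, funext fun j' => by
      rcases eq_or_ne j' j with rfl | hj' <;> simp [*]⟩
  ext j j'
  simp only [mul_apply, conjTranspose_apply, star_trivial, diagonal_apply]
  split_ifs with hjj'
  · subst hjj'
    refine sum_congr rfl fun i _ => ?_
    obtain ⟨k, hk⟩ := hrow i
    rw [hk]
    rcases eq_or_ne j k with rfl | hjk <;> simp [*]
  · refine sum_eq_zero fun i _ => ?_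
    obtain ⟨k, hk⟩ := hrow i
    rw [hk]
    rcases eq_or_ne j k with rfl | hjk <;> simp [*, Ne.symm hjj']

lemma card_filter_exists_ne_zero_eq_rank [Fintype β] [DecidablePred fun j => ∃ i, U i j ≠ 0]
    (hU : ∀ i j, 0 ≤ U i j)
    (h : ∀ i, ∃ j, U i j = 1 ∧ ∀ j', j' ≠ j → U i j' = 0) :
    (univ.filter fun j => ∃ i, U i j ≠ 0).card = (Uᴴ * U).rank := by
  rw [conjTranspose_mul_self_eq_diagonal_of_rows_single h, rank_diagonal, Fintype.card_subtype]
  congr! 2 with j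
  rw [Ne, sum_eq_zero_iff_of_nonneg fun i _ => hU i j]
  simp

end RowStochastic

theorem singVal_sq_add_sq_eq_iff_general (n m : ℕ)
    (U : Matrix (Fin n) (Fin m) ℝ)
    (hU : ∀ i j, 0 ≤ U i j) (hUrow : ∀ i, ∑ j, U i j = 1) :
    singVal U 0 ^ 2 + singVal U 1 ^ 2 = (n : ℝ) ↔
      ((∀ i, ∃ j, U i j = 1 ∧ ∀ j', j' ≠ j → U i j' = 0) ∧
        (Finset.univ.filter fun j => ∃ i, U i j ≠ 0).card ≤ 2) := by
  have hA := posSemidef_conjTranspose_mul_self U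
  set L := hA.1.sortedEigenvalues
  have hL0 : ∀ x ∈ L, 0 ≤ x := fun x => hA.nonneg_of_mem_sortedEigenvalues
  have hsq : singVal U 0 ^ 2 + singVal U 1 ^ 2 = L.getD 0 0 + L.getD 1 0 := by
    rw [singVal_eq_sqrt_getD, singVal_eq_sqrt_getD,
      Real.sq_sqrt (List.getD_of_forall_mem hL0 le_rfl 0),
      Real.sq_sqrt (List.getD_of_forall_mem hL0 le_rfl 1)]
  have hLsum : L.sum = ∑ i, ∑ j, U i j ^ 2 := by
    rw [← trace_conjTranspose_mul_self_eq_sum_sq]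
    exact hA.1.sum_sortedEigenvalues
  have hle := List.getD_zero_add_getD_one_le_sum hL0
  have hfrob : ∑ i, ∑ j, U i j ^ 2 ≤ n := by simpa using sum_sum_sq_le_card hU hUrow
  have hsandwich : L.getD 0 0 + L.getD 1 0 = n ↔
      ∑ i, ∑ j, U i j ^ 2 = n ∧ L.getD 0 0 + L.getD 1 0 = L.sum :=
    ⟨fun h => ⟨by linarith, by linarith⟩, fun h => by linarith [h.1, h.2]⟩
  have hrows : ∑ i, ∑ j, U i j ^ 2 = n ↔ ∀ i, ∃ j, U i j = 1 ∧ ∀ j', j' ≠ j → U i j' = 0 := by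
    simpa only [Fintype.card_fin] using sum_sum_sq_eq_card_iff hU hUrow
  rw [hsq, hsandwich, hrows, List.getD_zero_add_getD_one_eq_sum_iff hL0,
    ← L.countP_ne_zero_le_iff_of_pairwise_ge hA.1.pairwise_sortedEigenvalues hL0,
    hA.1.countP_sortedEigenvalues_ne_zero]
  exact and_congr_right fun hsingle => by rw [card_filter_exists_ne_zero_eq_rank hU hsingle]

/-- **"North" boundary (characterization):** for a row-stochastic `n × m` matrix
`U` with `m ≥ n ≥ 2`, `σ₁(U)² + σ₂(U)² = n` iff every row has exactly one
nonzero entry (which then equals 1) and at most two columns of `U` contain a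
nonzero entry. -/
theorem singVal_sq_add_sq_eq_iff (n m : ℕ) (hn : 2 ≤ n) (hm : n ≤ m)
    (U : Matrix (Fin n) (Fin m) ℝ)
    (hU : ∀ i j, 0 ≤ U i j) (hUrow : ∀ i, ∑ j, U i j = 1) :
    singVal U 0 ^ 2 + singVal U 1 ^ 2 = (n : ℝ) ↔
      ((∀ i, ∃ j, U i j = 1 ∧ ∀ j', j' ≠ j → U i j' = 0) ∧
        (Finset.univ.filter fun j => ∃ i, U i j ≠ 0).card ≤ 2) :=
  singVal_sq_add_sq_eq_iff_general n m U hU hUrow
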